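/- arXiv:1707.08762 — 2 statements merged into one kernel-verified Lean document; each statement's English description precedes it below -/
import Mathlib

section
/- The grounded extension of an attack graph is conflict-free: there are no t, t' in the least fixed point of the characteristic function such that t ⤙ t'. -/
def defends {α : Type*} (atk : α → α → Prop) (T : Set α) : Set α :=
  {t | ∀ t', atk t t' → ∃ t'' ∈ T, atk t' t''}

/-- The grounded extension: the least fixed point of the defense function,
constructed as the intersection of all prefixed points. -/
def groundedExt {α : Type*} (atk : α → α → Prop) : Set α :=
  ⋂₀ {T : Set α | defends atk T ⊆ T}

/-!
If `S` is a fixed point of `defends`, then `T = {x ∈ S | ∀ y ∈ S, ¬ atk x y}` is a prefixed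
point: for `x ∈ defends T` and `y ∈ S` with `atk x y`, the defence yields `z ∈ T` with `atk y z`,
and `y ∈ S = defends S` yields `w ∈ S` with `atk z w`, contradicting `z ∈ T`. Hence the grounded
extension, the least prefixed point, lies inside its own `T`.
-/

section

variable {α : Type*} (atk : α → α → Prop)

theorem defends_mono : Monotone (defends atk) :=
  fun _ _ hTS _ ht t' hatk ↦
    let ⟨t'', ht'', hatk'⟩ := ht t' hatk
    ⟨t'', hTS ht'', hatk'⟩

theorem groundedExt_eq_lfp :
    groundedExt atk = OrderHom.lfp (⟨defends atk, defends_mono atk⟩ : Set α →o Set α) :=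
  rfl

theorem defends_groundedExt : defends atk (groundedExt atk) = groundedExt atk := by
  rw [groundedExt_eq_lfp]
  exact OrderHom.map_lfp (⟨defends atk, defends_mono atk⟩ : Set α →o Set α)

theorem groundedExt_subset {T : Set α} (hT : defends atk T ⊆ T) : groundedExt atk ⊆ T :=
  Set.sInter_subset_of_mem hT

theorem defends_nonAttacking_subset {S : Set α} (hS : defends atk S = S) :
    defends atk {x ∈ S | ∀ y ∈ S, ¬ atk x y} ⊆ {x ∈ S | ∀ y ∈ S, ¬ atk x y} := by
  intro x hx
  have hxS : x ∈ S := hS.subset (defends_mono atk (fun _ hz ↦ hz.1) hx)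
  refine ⟨hxS, fun y hyS hxy ↦ ?_⟩
  obtain ⟨z, ⟨-, hz⟩, hyz⟩ := hx y hxy
  obtain ⟨w, hwS, hzw⟩ := (hS.symm.subset hyS : y ∈ defends atk S) z hyz
  exact hz w hwS hzw

end

/-- The grounded extension is conflict-free. -/
theorem groundedExt_conflictFree {α : Type*} (atk : α → α → Prop) :
    ¬ ∃ t t', t ∈ groundedExt atk ∧ t' ∈ groundedExt atk ∧ atk t t' := by
  rintro ⟨t, t', ht, ht', hatk⟩
  have hsub := groundedExt_subset atk (defends_nonAttacking_subset atk (defends_groundedExt atk))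
  exact (hsub ht).2 t' ht' hatk
end

section
/- Given a belief neighborhood model (X, N), define the topological argumentation model with τ = 2^X and attack relation: for t' ≠ ∅, t ⤙ t' iff t ∩ t' = ∅ and t ∉ N; and t ⤙ ∅ iff t = ∅. Then this attack relation satisfies the three axioms of a topological argumentation model. -/
/-!
Axioms 2 and 3 are immediate from upward closure of `N` and `∅ ∉ N`. For axiom 1, the point is
that of two disjoint sets at least one lies outside `N`: if `t₁ ∈ N`, then `t₂ ⊆ t₁ᶜ`, so
`t₂ ∈ N` would put `t₁ᶜ` in `N`. If `t₁ ∉ N`, then `nbAttack N t₁ t₂` holds unless `t₂ = ∅`,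
and `nbAttack N ∅ t` holds for every `t`.
-/

/-- The attack relation induced by a belief neighborhood `N` on `τ = 2^X`:
for `t' ≠ ∅`, `t' attacks t` iff they are disjoint and `t ∉ N`; the empty set
is attacked only by everything attacking it and attacks only itself. -/
def nbAttack {X : Type*} (N : Set (Set X)) (t t' : Set X) : Prop :=
  (t' ≠ ∅ ∧ t ∩ t' = ∅ ∧ t ∉ N) ∨ (t' = ∅ ∧ t = ∅)

open Set

section BeliefNeighborhood

variable {X : Type*} {N : Set (Set X)}

theorem empty_notMem_of_univ_mem (hX : univ ∈ N) (hcomp : ∀ b : Set X, b ∈ N → bᶜ ∉ N) :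
    (∅ : Set X) ∉ N := by
  simpa using hcomp univ hX

theorem notMem_or_notMem_of_disjoint (hup : IsUpperSet N)
    (hcomp : ∀ b : Set X, b ∈ N → bᶜ ∉ N) {t₁ t₂ : Set X} (h : Disjoint t₁ t₂) :
    t₁ ∉ N ∨ t₂ ∉ N := by
  by_contra! hmem
  exact hcomp t₁ hmem.1 (hup h.subset_compl_left hmem.2)

theorem nbAttack_empty_left (hN : (∅ : Set X) ∉ N) (t : Set X) : nbAttack N ∅ t := by
  rcases eq_or_ne t ∅ with rfl | ht
  · exact .inr ⟨rfl, rfl⟩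
  · exact .inl ⟨ht, empty_inter t, hN⟩

theorem nbAttack_empty_right_iff {t : Set X} : nbAttack N t ∅ ↔ t = ∅ := by
  simp [nbAttack]

theorem inter_eq_empty_of_nbAttack {t t' : Set X} (h : nbAttack N t t') : t ∩ t' = ∅ := by
  rcases h with ⟨-, hdisj, -⟩ | ⟨rfl, -⟩
  · exact hdisj
  · exact inter_empty t

theorem nbAttack_or_nbAttack_of_inter_eq_empty (hN : (∅ : Set X) ∉ N) {t₁ t₂ : Set X}
    (hnot : t₁ ∉ N ∨ t₂ ∉ N) (h : t₁ ∩ t₂ = ∅) : nbAttack N t₁ t₂ ∨ nbAttack N t₂ t₁ := by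
  rcases eq_or_ne t₁ ∅ with rfl | h₁
  · exact .inl (nbAttack_empty_left hN t₂)
  rcases eq_or_ne t₂ ∅ with rfl | h₂
  · exact .inr (nbAttack_empty_left hN t₁)
  rcases hnot with h₁N | h₂N
  · exact .inl (.inl ⟨h₂, h, h₁N⟩)
  · exact .inr (.inl ⟨h₁, by rwa [inter_comm], h₂N⟩)

theorem nbAttack.anti_left (hup : IsUpperSet N) {t t₁ t₁' : Set X} (h : nbAttack N t₁ t)
    (hsub : t₁' ⊆ t₁) : nbAttack N t₁' t := by
  rcases h with ⟨ht, hdisj, hN⟩ | ⟨ht, rfl⟩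
  · exact .inl ⟨ht, subset_empty_iff.mp (hdisj ▸ inter_subset_inter_left t hsub),
      fun h' => hN (hup hsub h')⟩
  · exact .inr ⟨ht, subset_empty_iff.mp hsub⟩

end BeliefNeighborhood

/-- The attack relation built from a belief neighborhood model satisfies the
three axioms of a topological argumentation model (with `τ = 2^X`). -/
theorem nbAttack_is_attack_relation {X : Type*} (N : Set (Set X))
    (hX : Set.univ ∈ N)
    (hsup : ∀ b b' : Set X, b ∈ N → b ⊆ b' → b' ∈ N)
    (hcomp : ∀ b : Set X, b ∈ N → bᶜ ∉ N) :
    (∀ t₁ t₂ : Set X, t₁ ∩ t₂ = ∅ ↔ nbAttack N t₁ t₂ ∨ nbAttack N t₂ t₁) ∧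
    (∀ t t₁ t₁' : Set X, nbAttack N t₁ t → t₁' ⊆ t₁ → nbAttack N t₁' t) ∧
    (∀ t : Set X, t ≠ ∅ → nbAttack N ∅ t ∧ ¬ nbAttack N t ∅) := by
  have hup : IsUpperSet N := fun b b' hsub hb => hsup b b' hb hsub
  have hempty : (∅ : Set X) ∉ N := empty_notMem_of_univ_mem hX hcomp
  refine ⟨fun t₁ t₂ => ⟨fun h => ?_, ?_⟩, fun t t₁ t₁' h hsub => h.anti_left hup hsub,
    fun t ht => ⟨nbAttack_empty_left hempty t, by rwa [nbAttack_empty_right_iff]⟩⟩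
  · have hnot := notMem_or_notMem_of_disjoint hup hcomp (disjoint_iff_inter_eq_empty.mpr h)
    exact nbAttack_or_nbAttack_of_inter_eq_empty hempty hnot h
  · rintro (h | h)
    · exact inter_eq_empty_of_nbAttack h
    · rw [inter_comm]
      exact inter_eq_empty_of_nbAttack h
end
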